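/- arXiv:2601.05869 — 2 statements merged into one kernel-verified Lean document; each statement's English description precedes it below -/
import Mathlib

section
/- Let h : ℝ → ℝ be C¹ with L := ‖h'‖_{L^∞}, c ∈ ℝ, g(t) = √((h(t)-c)₊), and let K_τ be a mollification kernel supported in (-τ, τ) with ∫|K_τ| ≤ 1 and ∫K_τ = 1. Then ‖(K_τ * g)² - g²‖_{L^∞} ≲ (1 + √L)·√τ·(‖g‖_{L^∞} + √(Lτ)) for an absolute implicit constant; in particular the mollification error of the squared amplitude is O(√τ) as τ → 0 (for fixed h). -/
open MeasureTheory Function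

/-!
Put `g t = √((h t - c)₊)`. Since `x ↦ √(x₊)` is Hölder-1/2 with constant `1` and `h` is
`L`-Lipschitz, `|g (t - s) - g t| ≤ √(L τ)` whenever `|s| < τ`. Because `∫ K = 1` and
`∫ |K| ≤ 1`, the mollified value `a = ∫ K s g (t - s)` then satisfies `|a| ≤ M` and
`|a - g t| ≤ √(L τ)`, so `|a² - (g t)²| = |a - g t| |a + g t| ≤ 2 M √L √τ`.
-/

theorem Real.sqrt_add_le_add_sqrt {x y : ℝ} (hx : 0 ≤ x) (hy : 0 ≤ y) :
    √(x + y) ≤ √x + √y := by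
  rw [Real.sqrt_le_iff]
  refine ⟨by positivity, ?_⟩
  nlinarith [Real.sq_sqrt hx, Real.sq_sqrt hy, mul_nonneg (Real.sqrt_nonneg x) (Real.sqrt_nonneg y)]

theorem Real.abs_sqrt_sub_sqrt_le {a b : ℝ} (ha : 0 ≤ a) (hb : 0 ≤ b) :
    |√a - √b| ≤ √|a - b| := by
  have key : ∀ {x y : ℝ}, 0 ≤ y → √x - √y ≤ √|x - y| := fun {x y} hy => by
    have : √x ≤ √(|x - y| + y) := Real.sqrt_le_sqrt (by linarith [le_abs_self (x - y)])
    linarith [Real.sqrt_add_le_add_sqrt (abs_nonneg (x - y)) hy]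
  rw [abs_sub_le_iff]
  exact ⟨key hb, abs_sub_comm a b ▸ key ha⟩

theorem abs_sqrt_max_sub_sub_sqrt_max_sub_le (x y c : ℝ) :
    |√(max (x - c) 0) - √(max (y - c) 0)| ≤ √|x - y| := by
  refine (Real.abs_sqrt_sub_sqrt_le (le_max_right _ _) (le_max_right _ _)).trans
    (Real.sqrt_le_sqrt ?_)
  simpa using abs_max_sub_max_le_abs (x - c) (y - c) 0

theorem abs_sub_le_of_abs_deriv_le {f : ℝ → ℝ} {L : ℝ} (hf : Differentiable ℝ f)
    (hf' : ∀ x, |deriv f x| ≤ L) (x y : ℝ) : |f x - f y| ≤ L * |x - y| := by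
  simpa using convex_univ.norm_image_sub_le_of_norm_deriv_le (fun z _ => hf z)
    (fun z _ => hf' z) (Set.mem_univ y) (Set.mem_univ x)

theorem abs_sqrt_max_sub_sub_sqrt_max_sub_le_of_abs_deriv_le {h : ℝ → ℝ} {L : ℝ}
    (hh : Differentiable ℝ h) (hh' : ∀ x, |deriv h x| ≤ L) (c u v : ℝ) :
    |√(max (h u - c) 0) - √(max (h v - c) 0)| ≤ √(L * |u - v|) :=
  (abs_sqrt_max_sub_sub_sqrt_max_sub_le _ _ c).trans
    (Real.sqrt_le_sqrt (abs_sub_le_of_abs_deriv_le hh hh' u v))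

section Kernel

variable {α : Type*} [MeasurableSpace α] {μ : Measure α} {K f : α → ℝ} {ε : ℝ}

theorem abs_integral_mul_le_of_abs_le_on_support (hK : Integrable K μ)
    (hK_abs : ∫ x, |K x| ∂μ ≤ 1) (hε : 0 ≤ ε) (hf : ∀ x ∈ support K, |f x| ≤ ε) :
    |∫ x, K x * f x ∂μ| ≤ ε := by
  have hpt : ∀ x, ‖K x * f x‖ ≤ |K x| * ε := fun x => by
    rw [Real.norm_eq_abs, abs_mul]
    by_cases hx : K x = 0
    · simp [hx]
    · exact mul_le_mul_of_nonneg_left (hf x hx) (abs_nonneg _)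
  calc |∫ x, K x * f x ∂μ| ≤ ∫ x, |K x| * ε ∂μ :=
        norm_integral_le_of_norm_le (hK.abs.mul_const ε) (ae_of_all _ hpt)
    _ = (∫ x, |K x| ∂μ) * ε := integral_mul_const _ _
    _ ≤ ε := mul_le_of_le_one_left hε hK_abs

theorem abs_integral_mul_sub_le_of_abs_sub_le_on_support (hK : Integrable K μ)
    (hK_abs : ∫ x, |K x| ∂μ ≤ 1) (hK_one : ∫ x, K x ∂μ = 1)
    (hKf : Integrable (fun x => K x * f x) μ) {b : ℝ} (hε : 0 ≤ ε)
    (hf : ∀ x ∈ support K, |f x - b| ≤ ε) :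
    |∫ x, K x * f x ∂μ - b| ≤ ε := by
  have hdiff : ∫ x, K x * f x ∂μ - b = ∫ x, K x * (f x - b) ∂μ := by
    simp_rw [mul_sub]
    rw [integral_sub hKf (hK.mul_const b), integral_mul_const, hK_one, one_mul]
  rw [hdiff]
  exact abs_integral_mul_le_of_abs_le_on_support hK hK_abs hε hf

end Kernel

/-- Mollification error for the squared amplitude.
For `g(t) = √((h(t)-c)₊)` with `L = ‖h'‖_∞` and a mollification kernel `K_τ`
supported in `(-τ,τ)` with `∫|K_τ| ≤ 1`, `∫K_τ = 1`, one has
`‖(K_τ * g)² - g²‖_{L^∞} ≲ (1+√L)·√τ·(‖g‖_∞ + √(Lτ))`. -/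
theorem mollification_error_squared_amplitude :
    ∃ C : ℝ, 0 < C ∧
      ∀ (h : ℝ → ℝ) (L c τ M : ℝ) (K : ℝ → ℝ),
        ContDiff ℝ 1 h → 0 ≤ L → (∀ x, |deriv h x| ≤ L) → 0 < τ →
        Integrable K →
        (Function.support K ⊆ Set.Ioo (-τ) τ) →
        (∫ s, |K s|) ≤ 1 → (∫ s, K s) = 1 →
        (∀ t, Real.sqrt (max (h t - c) 0) ≤ M) →
        ∀ t : ℝ,
          |(∫ s, K s * Real.sqrt (max (h (t - s) - c) 0)) ^ 2
              - Real.sqrt (max (h t - c) 0) ^ 2|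
            ≤ C * (1 + Real.sqrt L) * Real.sqrt τ * (M + Real.sqrt (L * τ)) := by
  refine ⟨2, two_pos, fun h L c τ M K hh hL hh' hτ hK hK_supp hK_abs hK_one hM t => ?_⟩
  set g : ℝ → ℝ := fun u => √(max (h u - c) 0)
  have hM0 : 0 ≤ M := (Real.sqrt_nonneg _).trans (hM 0)
  have hg_abs : ∀ u, |g u| ≤ M := fun u => (abs_of_nonneg (Real.sqrt_nonneg _)).trans_le (hM u)
  have hg_cont : Continuous g :=
    Real.continuous_sqrt.comp ((hh.continuous.sub continuous_const).max continuous_const)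
  have hKg : Integrable (fun s => K s * g (t - s)) :=
    hK.mul_bdd (hg_cont.comp (continuous_sub_left t)).aestronglyMeasurable
      (ae_of_all _ fun s => hg_abs (t - s))
  have hmean : |∫ s, K s * g (t - s)| ≤ M :=
    abs_integral_mul_le_of_abs_le_on_support hK hK_abs hM0 fun s _ => hg_abs (t - s)
  have herr : |(∫ s, K s * g (t - s)) - g t| ≤ √(L * τ) := by
    refine abs_integral_mul_sub_le_of_abs_sub_le_on_support (f := fun s => g (t - s))
      hK hK_abs hK_one hKg (Real.sqrt_nonneg _) fun s hs => ?_
    have hs_abs : |t - s - t| ≤ τ := by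
      rw [sub_sub_cancel_left, abs_neg, abs_le]
      exact ⟨(hK_supp hs).1.le, (hK_supp hs).2.le⟩
    exact (abs_sqrt_max_sub_sub_sqrt_max_sub_le_of_abs_deriv_le
      (hh.differentiable one_ne_zero) hh' c _ _).trans
        (Real.sqrt_le_sqrt (mul_le_mul_of_nonneg_left hs_abs hL))
  have hsum : |(∫ s, K s * g (t - s)) + g t| ≤ 2 * M :=
    (abs_add_le _ _).trans (by linarith [hg_abs t, hmean])
  rw [sq_sub_sq, abs_mul, mul_comm]
  calc _ ≤ √(L * τ) * (2 * M) := mul_le_mul herr hsum (abs_nonneg _) (Real.sqrt_nonneg _)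
    _ = 2 * √L * √τ * M := by rw [Real.sqrt_mul hL]; ring
    _ ≤ 2 * (1 + √L) * √τ * (M + √(L * τ)) := by
      gcongr
      · linarith
      · exact le_add_of_nonneg_right (Real.sqrt_nonneg _)
end

section
/- Let h, H : [0,T] → ℝ be C^{N+1} functions with h(t) - H(t) ≥ δ > 0 for all t, and suppose that |(d/dt)^M (h - H)(t)| ≤ A·B^M for all 0 ≤ M ≤ N+1 and t ∈ [0,T], where A ≥ δ and B > 0. Then there exists a constant C(N) depending only on N such that |(d/dt)^{N+1} √(h - H)(t)| ≤ C(N) (A/√δ)·(A/δ)^{N}·B^{N+1} for all t ∈ [0,T]. -/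
/-!
Normalise `u = (h - H) / δ`, so that `u ≥ 1` and `|u⁽ⁱ⁾| ≤ ((A / δ) B)ⁱ` for `1 ≤ i`, and write
`√(h - H) = √δ · √u`. On `[1, ∞)` every derivative of positive order of `y ↦ √y` is bounded by a
factorial, so the Faà di Bruno bound for `√ ∘ u` gives the claim with `C(N) = ((N + 1)!)²`.
-/

open Set Real Nat

theorem abs_descPochhammer_eval_le_factorial {r : ℝ} (hr : |r| ≤ 1) (n : ℕ) :
    |(descPochhammer ℝ n).eval r| ≤ n ! := by
  rw [descPochhammer_eval_eq_prod_range, Finset.abs_prod,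
    ← Finset.prod_range_add_one_eq_factorial]
  push_cast
  refine Finset.prod_le_prod (fun _ _ => abs_nonneg _) fun j _ => ?_
  calc |r - j| ≤ |r| + |(j : ℝ)| := abs_sub _ _
    _ ≤ j + 1 := by rw [Nat.abs_cast]; linarith

theorem abs_iteratedDeriv_rpow_const_le {p y : ℝ} {i : ℕ} (hp : |p| ≤ 1) (hpi : p ≤ i)
    (hy : 1 ≤ y) : |iteratedDeriv i (fun z => z ^ p) y| ≤ i ! := by
  rw [iteratedDeriv_eq_iterate, iter_deriv_rpow_const, abs_mul,
    abs_of_pos (rpow_pos_of_pos (by linarith) _)]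
  calc |(descPochhammer ℝ i).eval p| * y ^ (p - i) ≤ i ! * 1 :=
        mul_le_mul (abs_descPochhammer_eval_le_factorial hp i)
          (rpow_le_one_of_one_le_of_nonpos hy (by linarith)) (by positivity) (by positivity)
    _ = i ! := mul_one _

/-- Subtracting the constant `√(u x)` from `√` makes the zeroth-order term of the Faà di Bruno
bound vanish without changing any derivative of positive order. -/
theorem abs_iteratedDerivWithin_sqrt_comp_le {s : Set ℝ} (hs : UniqueDiffOn ℝ s) {u : ℝ → ℝ}
    {n : ℕ} (hn : 0 < n) (hu : ContDiffOn ℝ n u s) (hu1 : MapsTo u s (Ici 1)) {D x : ℝ}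
    (hx : x ∈ s) (hD : ∀ i, 1 ≤ i → i ≤ n → |iteratedDerivWithin i u s x| ≤ D ^ i) :
    |iteratedDerivWithin n (fun y => √(u y)) s x| ≤ n ! * n ! * D ^ n := by
  set c := u x ^ (1 / 2 : ℝ)
  set g : ℝ → ℝ := fun y => -c + y ^ (1 / 2 : ℝ)
  have hux : 1 ≤ u x := hu1 hx
  have hsqrt : (fun y => √(u y)) = fun y => c + (g ∘ u) y := by
    funext y
    simp only [g, Function.comp_apply, sqrt_eq_rpow, add_neg_cancel_left]
  have hg : ContDiffOn ℝ n g (Ici 1) := fun y (hy : 1 ≤ y) =>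
    (contDiffAt_const.add (contDiffAt_rpow_const_of_ne (by linarith))).contDiffWithinAt
  have hC : ∀ i ≤ n, ‖iteratedFDerivWithin ℝ i g (Ici 1) (u x)‖ ≤ n ! := by
    intro i hi
    rw [norm_iteratedFDerivWithin_eq_norm_iteratedDerivWithin, norm_eq_abs]
    rcases i.eq_zero_or_pos with rfl | hi0
    · simp [g, c]
    rw [iteratedDerivWithin_const_add hi0, iteratedDerivWithin_eq_iteratedDeriv
      (uniqueDiffOn_Ici 1) (contDiffAt_rpow_const_of_ne (by linarith)) hux]
    calc _ ≤ (i ! : ℝ) := abs_iteratedDeriv_rpow_const_le (by norm_num [abs_of_pos])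
          (le_trans (by norm_num) (one_le_cast.mpr hi0)) hux
      _ ≤ n ! := cast_le.mpr (factorial_le hi)
  rw [hsqrt, iteratedDerivWithin_const_add hn, ← norm_eq_abs,
    ← norm_iteratedFDerivWithin_eq_norm_iteratedDerivWithin]
  refine norm_iteratedFDerivWithin_comp_le hg hu le_rfl (uniqueDiffOn_Ici 1) hs hu1 hx hC ?_
  simpa only [norm_iteratedFDerivWithin_eq_norm_iteratedDerivWithin, norm_eq_abs] using hD

/-- Quantitative chain rule for the square root of a function
bounded away from zero: if `h - H ≥ δ > 0` on `[0,T]` and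
`|(d/dt)^M (h-H)| ≤ A·B^M` for all `M ≤ N+1` with `A ≥ δ`, then
`|(d/dt)^{N+1} √(h-H)| ≤ C(N)·(A/√δ)·(A/δ)^N·B^{N+1}` on `[0,T]`. -/
theorem iterated_deriv_sqrt_bound (N : ℕ) :
    ∃ C : ℝ, 0 < C ∧
      ∀ (h H : ℝ → ℝ) (T δ A B : ℝ), 0 < T → 0 < δ → δ ≤ A → 0 < B →
        ContDiffOn ℝ (N + 1 : ℕ) h (Set.Icc 0 T) →
        ContDiffOn ℝ (N + 1 : ℕ) H (Set.Icc 0 T) →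
        (∀ t ∈ Set.Icc (0:ℝ) T, δ ≤ h t - H t) →
        (∀ M ≤ N + 1, ∀ t ∈ Set.Icc (0:ℝ) T,
          |iteratedDerivWithin M (fun s => h s - H s) (Set.Icc 0 T) t|
            ≤ A * B ^ M) →
        ∀ t ∈ Set.Icc (0:ℝ) T,
          |iteratedDerivWithin (N + 1) (fun s => Real.sqrt (h s - H s))
              (Set.Icc 0 T) t|
            ≤ C * (A / Real.sqrt δ) * (A / δ) ^ N * B ^ (N + 1) := by
  refine ⟨(N + 1)! ^ 2, by positivity, ?_⟩
  intro h H T δ A B hT hδ hδA _ hh hH hlow hbound t ht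
  set u : ℝ → ℝ := fun s => δ⁻¹ * (h s - H s)
  have hsqrt : (fun s => √(h s - H s)) = fun s => √δ * √(u s) := by
    funext s
    rw [← sqrt_mul hδ.le, mul_inv_cancel_left₀ hδ.ne']
  have hu1 : MapsTo u (Icc 0 T) (Ici 1) := fun s hs =>
    (one_le_inv_mul₀ hδ).mpr (hlow s hs)
  have hAδ : 1 ≤ A / δ := (one_le_div hδ).mpr hδA
  have hD : ∀ i, 1 ≤ i → i ≤ N + 1 →
      |iteratedDerivWithin i u (Icc 0 T) t| ≤ (A / δ * B) ^ i := fun i hi1 hi => calc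
    _ = δ⁻¹ * |iteratedDerivWithin i (fun s => h s - H s) (Icc 0 T) t| := by
      rw [iteratedDerivWithin_const_mul_field, abs_mul, abs_of_pos (inv_pos.mpr hδ)]
    _ ≤ δ⁻¹ * (A * B ^ i) := by gcongr; exact hbound i hi t ht
    _ = A / δ * B ^ i := by ring
    _ ≤ (A / δ * B) ^ i := by rw [mul_pow]; gcongr; exact le_self_pow₀ hAδ (by omega)
  have hcomp := abs_iteratedDerivWithin_sqrt_comp_le (uniqueDiffOn_Icc hT) N.succ_pos
    (contDiffOn_const.mul (hh.sub hH)) hu1 ht hD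
  have hsqrtδ : √δ * (A / δ) = A / √δ := by
    field_simp
    rw [sq_sqrt hδ.le, mul_comm]
  rw [hsqrt, iteratedDerivWithin_const_mul_field, abs_mul, abs_of_nonneg (sqrt_nonneg δ)]
  calc √δ * |iteratedDerivWithin (N + 1) (fun s => √(u s)) (Icc 0 T) t|
      ≤ √δ * ((N + 1)! * (N + 1)! * (A / δ * B) ^ (N + 1)) :=
        mul_le_mul_of_nonneg_left hcomp (sqrt_nonneg δ)
    _ = (N + 1)! ^ 2 * (√δ * (A / δ)) * (A / δ) ^ N * B ^ (N + 1) := by ring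
    _ = (N + 1)! ^ 2 * (A / √δ) * (A / δ) ^ N * B ^ (N + 1) := by rw [hsqrtδ]
end
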